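/- For all real x ∈ [-1/2, 1/2]: |E₄(x + 0.65i)| < 5.9 and |E₄(x + 0.75i)| < 3.45, where E₄ is the normalized weight-4 Eisenstein series. -/

import Mathlib

open Complex Real

/-- The divisor-power sum `σ_k(n) = ∑_{d ∣ n} d^k`. -/
def sigma' (k n : ℕ) : ℕ := ∑ d ∈ n.divisors, d ^ k

/-- The weight-4 Eisenstein series `E₄(τ) = 1 + 240 ∑ σ₃(n) qⁿ`, `q = e^{2πiτ}`. -/
noncomputable def E4 (τ : ℂ) : ℂ :=
  1 + 240 * ∑' n : ℕ, (sigma' 3 (n + 1) : ℂ) * Complex.exp (2 * π * I * τ) ^ (n + 1)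

/-!
On the line `Im τ = y` we have `|q| = e^{-2πy}`, so `|E₄(τ)| ≤ 1 + 240 ∑ σ₃(n) ρⁿ` for any
`ρ ≥ e^{-2πy}`. The first two terms are taken exactly (`σ₃(1) = 1`, `σ₃(2) = 9`); for the rest
`σ₃(n) ≤ n⁴ ≤ (81/64) 4ⁿ` turns the tail into a geometric series, giving
`|E₄(τ)| ≤ 1 + 240 (ρ + 9ρ² + 81ρ³/(1 - 4ρ))`. A Taylor partial sum of `exp` bounds `e^{-2πy}`
by `0.0172` at `y = 0.65` and by `0.0093` at `y = 0.75`, which is small enough.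
-/

open Nat ArithmeticFunction

open scoped ArithmeticFunction.sigma

lemma sigma'_eq_sigma (k n : ℕ) : sigma' k n = σ k n := by
  rw [sigma_apply]; rfl

lemma pow_four_le_four_pow (n : ℕ) : 64 * n ^ 4 ≤ 81 * 4 ^ n := by
  rcases lt_or_ge n 3 with hn | hn
  · interval_cases n <;> norm_num
  induction n, hn using Nat.le_induction with
  | base => norm_num
  | succ n _ ih =>
    have h : 3 ^ 4 * (n + 1) ^ 4 ≤ 4 ^ 4 * n ^ 4 := by
      simpa only [mul_pow] using Nat.pow_le_pow_left (show 3 * (n + 1) ≤ 4 * n by omega) 4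
    calc 64 * (n + 1) ^ 4 ≤ 3 ^ 4 * (n + 1) ^ 4 := Nat.mul_le_mul_right _ (by norm_num)
      _ ≤ 4 ^ 4 * n ^ 4 := h
      _ ≤ 4 * (81 * 4 ^ n) := by linarith
      _ = 81 * 4 ^ (n + 1) := by ring

section

variable {ρ : ℝ}

lemma sigma'_three_mul_pow_le (hρ : 0 ≤ ρ) (n : ℕ) :
    (sigma' 3 n : ℝ) * ρ ^ n ≤ 81 / 64 * (4 * ρ) ^ n := by
  have h : 64 * sigma' 3 n ≤ 81 * 4 ^ n :=
    (Nat.mul_le_mul_left 64 (sigma'_eq_sigma 3 n ▸ sigma_le_pow_succ 3 n)).trans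
      (pow_four_le_four_pow n)
  have h' : (sigma' 3 n : ℝ) ≤ 81 / 64 * 4 ^ n := by
    have : (64 * sigma' 3 n : ℝ) ≤ 81 * 4 ^ n := by exact_mod_cast h
    linarith
  calc (sigma' 3 n : ℝ) * ρ ^ n ≤ 81 / 64 * 4 ^ n * ρ ^ n := by gcongr
    _ = 81 / 64 * (4 * ρ) ^ n := by ring

lemma summable_sigma'_three_mul_pow (hρ0 : 0 ≤ ρ) (hρ : ρ < 1 / 4) :
    Summable fun n : ℕ => (sigma' 3 (n + 1) : ℝ) * ρ ^ (n + 1) := by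
  refine Summable.of_nonneg_of_le (fun n => by positivity)
    (fun n => sigma'_three_mul_pow_le hρ0 (n + 1)) ?_
  exact ((summable_nat_add_iff 1).2
    (summable_geometric_of_lt_one (by positivity) (by linarith))).mul_left _

lemma tsum_sigma'_three_mul_pow_le (hρ0 : 0 ≤ ρ) (hρ : ρ < 1 / 4) :
    ∑' n : ℕ, (sigma' 3 (n + 1) : ℝ) * ρ ^ (n + 1) ≤
      ρ + 9 * ρ ^ 2 + 81 * ρ ^ 3 / (1 - 4 * ρ) := by
  have hs := summable_sigma'_three_mul_pow hρ0 hρ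
  have h4ρ : 4 * ρ < 1 := by linarith
  have hgeom := summable_geometric_of_lt_one (by positivity) h4ρ
  have htail : ∑' n : ℕ, (sigma' 3 (n + 3) : ℝ) * ρ ^ (n + 3) ≤ 81 * ρ ^ 3 / (1 - 4 * ρ) :=
    calc ∑' n : ℕ, (sigma' 3 (n + 3) : ℝ) * ρ ^ (n + 3)
        ≤ ∑' n : ℕ, 81 / 64 * (4 * ρ) ^ 3 * (4 * ρ) ^ n := by
          refine Summable.tsum_le_tsum (fun n => ?_) ((summable_nat_add_iff 2).2 hs)
            (hgeom.mul_left _)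
          rw [mul_assoc, ← pow_add, add_comm 3]
          exact sigma'_three_mul_pow_le hρ0 (n + 3)
      _ = 81 * ρ ^ 3 / (1 - 4 * ρ) := by
          rw [tsum_mul_left, tsum_geometric_of_lt_one (by positivity) h4ρ]
          ring
  rw [← hs.sum_add_tsum_nat_add 2]
  have h1 : sigma' 3 1 = 1 := by decide
  have h2 : sigma' 3 2 = 9 := by decide
  simp only [Finset.sum_range_succ, Finset.sum_range_zero, h1, h2]
  push_cast
  linarith

end

lemma norm_E4_le {τ : ℂ} {ρ : ℝ} (hq : ‖cexp (2 * π * I * τ)‖ ≤ ρ) (hρ : ρ < 1 / 4) :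
    ‖E4 τ‖ ≤ 1 + 240 * (ρ + 9 * ρ ^ 2 + 81 * ρ ^ 3 / (1 - 4 * ρ)) := by
  have hρ0 : 0 ≤ ρ := (norm_nonneg _).trans hq
  have hseries : ‖∑' n : ℕ, (sigma' 3 (n + 1) : ℂ) * cexp (2 * π * I * τ) ^ (n + 1)‖ ≤
      ∑' n : ℕ, (sigma' 3 (n + 1) : ℝ) * ρ ^ (n + 1) := by
    refine tsum_of_norm_bounded (summable_sigma'_three_mul_pow hρ0 hρ).hasSum fun n => ?_
    rw [norm_mul, norm_pow, Complex.norm_natCast]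
    gcongr
  calc ‖E4 τ‖
      ≤ 1 + 240 * ‖∑' n : ℕ, (sigma' 3 (n + 1) : ℂ) * cexp (2 * π * I * τ) ^ (n + 1)‖ := by
        refine (norm_add_le _ _).trans_eq ?_
        rw [norm_mul]; norm_num
    _ ≤ 1 + 240 * (ρ + 9 * ρ ^ 2 + 81 * ρ ^ 3 / (1 - 4 * ρ)) := by
        gcongr
        exact hseries.trans (tsum_sigma'_three_mul_pow_le hρ0 hρ)

lemma exp_neg_le_inv_sum_range {x : ℝ} (hx : 0 ≤ x) (n : ℕ) :
    rexp (-x) ≤ (∑ i ∈ Finset.range (n + 1), x ^ i / i !)⁻¹ := by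
  have hpos : 0 < ∑ i ∈ Finset.range (n + 1), x ^ i / i ! :=
    Finset.sum_pos' (fun i _ => by positivity) ⟨0, by simp⟩
  rw [Real.exp_neg]
  exact inv_anti₀ hpos (Real.sum_le_exp_of_nonneg hx _)

lemma norm_cexp_two_pi_I_mul_le {τ : ℂ} (hτ : 0 ≤ τ.im) (n : ℕ) :
    ‖cexp (2 * π * I * τ)‖ ≤ (∑ i ∈ Finset.range (n + 1), (6.28 * τ.im) ^ i / i !)⁻¹ := by
  have hre : (2 * π * I * τ).re = -(2 * π * τ.im) := by simp
  rw [Complex.norm_exp, hre]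
  calc rexp (-(2 * π * τ.im)) ≤ rexp (-(6.28 * τ.im)) := by
        gcongr; linarith [Real.pi_gt_d2]
    _ ≤ _ := exp_neg_le_inv_sum_range (by positivity) n

theorem E4_line_bounds_general (x : ℝ) :
    ‖E4 ((x : ℂ) + 0.65 * I)‖ < 5.9 ∧ ‖E4 ((x : ℂ) + 0.75 * I)‖ < 3.45 := by
  have hq₁ : ‖cexp (2 * π * I * ((x : ℂ) + 0.65 * I))‖ ≤ 0.0172 :=
    (norm_cexp_two_pi_I_mul_le (by norm_num) 11).trans
      (by norm_num [Finset.sum_range_succ, Nat.factorial])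
  have hq₂ : ‖cexp (2 * π * I * ((x : ℂ) + 0.75 * I))‖ ≤ 0.0093 :=
    (norm_cexp_two_pi_I_mul_le (by norm_num) 11).trans
      (by norm_num [Finset.sum_range_succ, Nat.factorial])
  exact ⟨(norm_E4_le hq₁ (by norm_num)).trans_lt (by norm_num),
    (norm_E4_le hq₂ (by norm_num)).trans_lt (by norm_num)⟩

theorem E4_line_bounds (x : ℝ) (hx : x ∈ Set.Icc (-(1/2) : ℝ) (1/2)) :
    ‖E4 ((x : ℂ) + 0.65 * I)‖ < 5.9 ∧ ‖E4 ((x : ℂ) + 0.75 * I)‖ < 3.45 :=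
  E4_line_bounds_general x
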